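/- For every crossingless matching C on {1,…,n} with exactly k cups, the number of weight sequences w such that w orients C equals 2^k. Consequently, for every standard tableau S of shape (n−k,k), the component set Y_S contains exactly 2^k torus-fixed flags. -/

import Mathlib

open Module

namespace Springer

/-- The nilpotent endomorphism `N` of `ℂ^n` with two Jordan blocks of sizes `n-k` and `k`:
the basis vectors `e 0, …, e (n-k-1)` are `p 1, …, p (n-k)` and
`e (n-k), …, e (n-1)` are `q 1, …, q k`; `N` shifts each block down by one. -/
def Nmap (n k : ℕ) : (Fin n → ℂ) →ₗ[ℂ] (Fin n → ℂ) where
  toFun x j := if h : j.val + 1 < n ∧ j.val + 1 ≠ n - k then x ⟨j.val + 1, h.1⟩ else 0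
  map_add' x y := by
    funext j
    by_cases h : j.val + 1 < n ∧ j.val + 1 ≠ n - k <;> simp [h]
  map_smul' c x := by
    funext j
    by_cases h : j.val + 1 < n ∧ j.val + 1 ≠ n - k <;> simp [h]

/-- `span (p 1, …, p t, q 1, …, q b)` inside `ℂ^n`. -/
noncomputable def spanPQ (n k t b : ℕ) : Submodule ℂ (Fin n → ℂ) :=
  Submodule.span ℂ {x | ∃ j : Fin n,
    ((j.val < t ∧ j.val < n - k) ∨ (n - k ≤ j.val ∧ j.val < n - k + b)) ∧ x = Pi.single j 1}

/-- `P = span (p 1, …, p (n-k))`. -/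
noncomputable def Pmod (n k : ℕ) : Submodule ℂ (Fin n → ℂ) := spanPQ n k (n - k) 0

/-- `Q = span (q 1, …, q k)`. -/
noncomputable def Qmod (n k : ℕ) : Submodule ℂ (Fin n → ℂ) := spanPQ n k 0 k

/-- The projection of `V` onto `Q` along `P`. -/
def projQ (n k : ℕ) : (Fin n → ℂ) →ₗ[ℂ] (Fin n → ℂ) where
  toFun x j := if n - k ≤ j.val then x j else 0
  map_add' x y := by
    funext j
    by_cases h : n - k ≤ j.val
    · simp only [Pi.add_apply, if_pos h]
    · simp only [Pi.add_apply, if_neg h, add_zero]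
  map_smul' c x := by
    funext j
    by_cases h : n - k ≤ j.val
    · simp only [Pi.smul_apply, smul_eq_mul, if_pos h, RingHom.id_apply]
    · simp only [Pi.smul_apply, smul_eq_mul, if_neg h, mul_zero, RingHom.id_apply]

/-- A complete `N`-invariant flag in `ℂ^n`: a chain `F 0 ⊆ ⋯ ⊆ F n` with `dim F i = i`
(thus `F 0 = 0` and `F n = V`) and `N (F (i+1)) ⊆ F i`. -/
def IsNFlag (n k : ℕ) (F : Fin (n + 1) → Submodule ℂ (Fin n → ℂ)) : Prop :=
  Monotone F ∧ (∀ i : Fin (n + 1), finrank ℂ (F i) = i.val) ∧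
    ∀ i : Fin n, Submodule.map (Nmap n k) (F i.succ) ≤ F i.castSucc

/-- A flag is torus fixed if each subspace is spanned by its intersections with `P` and `Q`. -/
def TorusFixed (n k : ℕ) (F : Fin (n + 1) → Submodule ℂ (Fin n → ℂ)) : Prop :=
  ∀ i, F i = (F i ⊓ Pmod n k) ⊔ (F i ⊓ Qmod n k)

/-- A weight sequence (row-strict tableau) of shape `(n-k, k)`:
`true` encodes `∨` and `false` encodes `∧`; there are exactly `k` symbols `∨`. -/
def IsWeightSeq (n k : ℕ) (w : Fin n → Bool) : Prop :=
  (Finset.univ.filter fun i => w i = true).card = k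

/-- `t i` = number of 1-based positions `≤ i` labelled `∧`. -/
def tcount (n : ℕ) (w : Fin n → Bool) (i : ℕ) : ℕ :=
  (Finset.univ.filter fun j : Fin n => j.val < i ∧ w j = false).card

/-- `b i` = number of 1-based positions `≤ i` labelled `∨`. -/
def bcount (n : ℕ) (w : Fin n → Bool) (i : ℕ) : ℕ :=
  (Finset.univ.filter fun j : Fin n => j.val < i ∧ w j = true).card

/-- The torus fixed flag `Φ(w)` attached to a weight sequence `w`:
`Φ(w) i = span (p 1, …, p (t i), q 1, …, q (b i))`. -/
noncomputable def PhiFlag (n k : ℕ) (w : Fin n → Bool) : Fin (n + 1) → Submodule ℂ (Fin n → ℂ) :=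
  fun i => spanPQ n k (tcount n w i.val) (bcount n w i.val)

/-- A crossingless matching on the points `1, …, n`: a set of cups `(i, j)` with
`1 ≤ i < j ≤ n`, pairwise disjoint, mutually non-crossing, and such that no unmatched
point (ray) lies strictly inside any cup. -/
structure CrossinglessMatching (n : ℕ) where
  cups : Finset (ℕ × ℕ)
  mem_range : ∀ p ∈ cups, 1 ≤ p.1 ∧ p.1 < p.2 ∧ p.2 ≤ n
  disjoint' : ∀ p ∈ cups, ∀ q ∈ cups, p ≠ q →
    p.1 ≠ q.1 ∧ p.1 ≠ q.2 ∧ p.2 ≠ q.1 ∧ p.2 ≠ q.2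
  noncross : ∀ p ∈ cups, ∀ q ∈ cups, ¬(p.1 < q.1 ∧ q.1 < p.2 ∧ p.2 < q.2)
  rays_outside : ∀ p ∈ cups, ∀ m : ℕ, p.1 < m → m < p.2 → ∃ q ∈ cups, m = q.1 ∨ m = q.2

/-- The point `m ∈ {1, …, n}` is matched (lies on a cup) in `C`. -/
def Matched (n : ℕ) (C : CrossinglessMatching n) (m : ℕ) : Prop :=
  ∃ p ∈ C.cups, m = p.1 ∨ m = p.2

/-- A standard tableau of shape `(n-k, k)`: a filling of the two-row Young diagram by
the numbers `1, …, n`, each used exactly once, with rows and columns strictly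
decreasing read from the top left. -/
structure StandardTableau (n k : ℕ) where
  top : Fin (n - k) → ℕ
  bot : Fin k → ℕ
  top_strict : ∀ i j : Fin (n - k), i < j → top j < top i
  bot_strict : ∀ i j : Fin k, i < j → bot j < bot i
  col_strict : ∀ (i : Fin (n - k)) (j : Fin k), i.val = j.val → bot j < top i
  mem_iff : ∀ m : ℕ, (1 ≤ m ∧ m ≤ n) ↔ ((∃ i, top i = m) ∨ (∃ j, bot j = m))
  top_ne_bot : ∀ (i : Fin (n - k)) (j : Fin k), top i ≠ bot j

/-- `C` is the crossingless matching `m(S)` associated with the standard tableau `S`: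
it has `k` cups and its left cup endpoints are exactly the bottom-row entries of `S`. -/
def IsMatchOf (n k : ℕ) (S : StandardTableau n k) (C : CrossinglessMatching n) : Prop :=
  C.cups.card = k ∧ ∀ m : ℕ, (∃ p ∈ C.cups, p.1 = m) ↔ ∃ j, S.bot j = m

/-- The weight sequence of a standard tableau: `∨` (i.e. `true`) exactly on the
bottom-row entries. -/
def tabWeight (n k : ℕ) (S : StandardTableau n k) : Fin n → Bool :=
  fun j => decide (∃ i, S.bot i = j.val + 1)

/-- The cup conditions cutting out `Y_S`: for every cup `(i, σ i)` of the matching,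
`N ^ δ i (F (σ i)) = F (i - 1)` where `δ i = (σ i - i + 1)/2`. -/
def CupCond (n k : ℕ) (C : CrossinglessMatching n)
    (F : Fin (n + 1) → Submodule ℂ (Fin n → ℂ)) : Prop :=
  ∀ p ∈ C.cups, ∀ (h1 : p.1 - 1 < n + 1) (h2 : p.2 < n + 1),
    Submodule.map ((Nmap n k) ^ ((p.2 - p.1 + 1) / 2)) (F ⟨p.2, h2⟩) = F ⟨p.1 - 1, h1⟩

/-- The ray conditions cutting out `Y_S` (for the weight sequence of `S`): for every
ray `m` of the matching, `F m = (N ^ b m)⁻¹ (range (N ^ (n - k - t m + b m)))`. -/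
def RayCond (n k : ℕ) (w : Fin n → Bool) (C : CrossinglessMatching n)
    (F : Fin (n + 1) → Submodule ℂ (Fin n → ℂ)) : Prop :=
  ∀ m : ℕ, 1 ≤ m → ∀ hm : m < n + 1, ¬ Matched n C m →
    F ⟨m, hm⟩ = Submodule.comap ((Nmap n k) ^ (bcount n w m))
      (LinearMap.range ((Nmap n k) ^ (n - k - tcount n w m + bcount n w m)))

/-- Membership in the (Spaltenstein–Vargas–Fung) component `Y_S`, where `C = m(S)`. -/
def InYS (n k : ℕ) (S : StandardTableau n k) (C : CrossinglessMatching n)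
    (F : Fin (n + 1) → Submodule ℂ (Fin n → ℂ)) : Prop :=
  IsNFlag n k F ∧ CupCond n k C F ∧ RayCond n k (tabWeight n k S) C F

/-- The weight sequence `v` orients the crossingless matching `C`: opposite labels at
the two endpoints of every cup, and `∧` at every ray. -/
def OrientsMatching (n : ℕ) (v : Fin n → Bool) (C : CrossinglessMatching n) : Prop :=
  (∀ p ∈ C.cups, ∀ (h1 : p.1 - 1 < n) (h2 : p.2 - 1 < n),
      v ⟨p.1 - 1, h1⟩ ≠ v ⟨p.2 - 1, h2⟩) ∧
  (∀ m : ℕ, 1 ≤ m → m ≤ n → ¬ Matched n C m → ∀ h : m - 1 < n, v ⟨m - 1, h⟩ = false)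

/-- `C` is the matching `m(w)` produced from the weight sequence `w` by repeatedly
joining a pair `i < j` with `w i = ∨`, `w j = ∧` and all points strictly between them
already matched, until no such pair remains. -/
def IsMw (n : ℕ) (w : Fin n → Bool) (C : CrossinglessMatching n) : Prop :=
  (∀ p ∈ C.cups, ∀ (h1 : p.1 - 1 < n) (h2 : p.2 - 1 < n),
      w ⟨p.1 - 1, h1⟩ = true ∧ w ⟨p.2 - 1, h2⟩ = false) ∧
  ¬ ∃ i j : ℕ, 1 ≤ i ∧ i < j ∧ j ≤ n ∧ ¬ Matched n C i ∧ ¬ Matched n C j ∧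
      (∀ h : i - 1 < n, w ⟨i - 1, h⟩ = true) ∧ (∀ h : j - 1 < n, w ⟨j - 1, h⟩ = false) ∧
      (∀ m : ℕ, i < m → m < j → Matched n C m)

/-- `Cw` is the completed matching `C(w)`: a crossingless matching with `k` cups
containing `m(w) = Cm` on whose every cup `w` puts opposite labels. -/
def IsCw (n k : ℕ) (w : Fin n → Bool) (Cm Cw : CrossinglessMatching n) : Prop :=
  Cm.cups ⊆ Cw.cups ∧ Cw.cups.card = k ∧
  ∀ p ∈ Cw.cups, ∀ (h1 : p.1 - 1 < n) (h2 : p.2 - 1 < n),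
    w ⟨p.1 - 1, h1⟩ ≠ w ⟨p.2 - 1, h2⟩

/-- Membership in the closed attracting set `St(w)`, where `S = S(w)` and `Cw = C(w)`:
a flag of `Y_{S(w)}` such that `F i = Φ(w) i` for every `i` with `w i = ∧` which is a
left cup endpoint of `C(w)`. -/
def InSt (n k : ℕ) (w : Fin n → Bool) (S : StandardTableau n k)
    (Cw : CrossinglessMatching n) (F : Fin (n + 1) → Submodule ℂ (Fin n → ℂ)) : Prop :=
  InYS n k S Cw F ∧
  ∀ i : ℕ, ∀ hi : i < n + 1, (∀ h : i - 1 < n, w ⟨i - 1, h⟩ = false) →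
    (∃ p ∈ Cw.cups, p.1 = i) → F ⟨i, hi⟩ = PhiFlag n k w ⟨i, hi⟩

/-- The generating relation of `∼_C`: `a ∼ σ(a+1)` whenever `a+1` is a left cup
endpoint of `C`. -/
def cupRel (n : ℕ) (C : CrossinglessMatching n) (a b : ℕ) : Prop :=
  ∃ p ∈ C.cups, p.1 = a + 1 ∧ p.2 = b

/-- The equivalence relation `∼_C` on `{0, 1, …, n}`. -/
def simRel (n : ℕ) (C : CrossinglessMatching n) : ℕ → ℕ → Prop :=
  Relation.EqvGen (cupRel n C)

/-- The equivalence relation `≈_{C,D}` on `{0, 1, …, n}` generated by `∼_C` and `∼_D`. -/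
def approxRel (n : ℕ) (C D : CrossinglessMatching n) : ℕ → ℕ → Prop :=
  Relation.EqvGen (fun a b => cupRel n C a b ∨ cupRel n D a b)

/-- Adjacency in the glued diagram `D̄C`: `i` and `j` are joined by a cup of `C` or of `D`. -/
def Adj (n : ℕ) (C D : CrossinglessMatching n) (i j : ℕ) : Prop :=
  (i, j) ∈ C.cups ∨ (j, i) ∈ C.cups ∨ (i, j) ∈ D.cups ∨ (j, i) ∈ D.cups

/-- Lying in the same connected component of the glued diagram `D̄C`. -/
def Conn (n : ℕ) (C D : CrossinglessMatching n) : ℕ → ℕ → Prop :=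
  Relation.EqvGen (Adj n C D)

/-- The component of `v` in the glued diagram is a circle: every vertex of the
component is matched both in `C` and in `D`. -/
def IsCircleComp (n : ℕ) (C D : CrossinglessMatching n) (v : ℕ) : Prop :=
  ∀ u, Conn n C D u v → Matched n C u ∧ Matched n D u

/-- `v` is the leftmost vertex of its connected component (circle or line) of the
glued diagram. -/
def IsLeftmost (n : ℕ) (C D : CrossinglessMatching n) (v : ℕ) : Prop :=
  1 ≤ v ∧ v ≤ n ∧ ∀ u, 1 ≤ u → Conn n C D u v → v ≤ u

/-- An orientation of the glued diagram `D̄C` (with `C = m(w)` and `D = m(w')`):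
a weight sequence assigning opposite labels to the endpoints of every cup of `C` and
of `D`, agreeing with `w` at every ray of `C` and with `w'` at every ray of `D`. -/
def OrientsGlued (n k : ℕ) (w w' : Fin n → Bool) (C D : CrossinglessMatching n)
    (v : Fin n → Bool) : Prop :=
  IsWeightSeq n k v ∧
  (∀ p ∈ C.cups, ∀ (h1 : p.1 - 1 < n) (h2 : p.2 - 1 < n),
      v ⟨p.1 - 1, h1⟩ ≠ v ⟨p.2 - 1, h2⟩) ∧
  (∀ p ∈ D.cups, ∀ (h1 : p.1 - 1 < n) (h2 : p.2 - 1 < n),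
      v ⟨p.1 - 1, h1⟩ ≠ v ⟨p.2 - 1, h2⟩) ∧
  (∀ i : Fin n, ¬ Matched n C (i.val + 1) → v i = w i) ∧
  (∀ i : Fin n, ¬ Matched n D (i.val + 1) → v i = w' i)

/-- The component of `v0` in the glued diagram is orientable: it admits a labeling of
its vertices by `∧, ∨`, opposite across every edge, agreeing with `w` at every vertex
which is a ray of `C` and with `w'` at every vertex which is a ray of `D`. -/
def ComponentOrientable (n : ℕ) (w w' : Fin n → Bool) (C D : CrossinglessMatching n)
    (v0 : ℕ) : Prop :=
  ∃ g : ℕ → Bool,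
    (∀ i j, Conn n C D i v0 → Adj n C D i j → g i ≠ g j) ∧
    (∀ i, Conn n C D i v0 → 1 ≤ i → i ≤ n → ¬ Matched n C i →
      ∀ h : i - 1 < n, g i = w ⟨i - 1, h⟩) ∧
    (∀ i, Conn n C D i v0 → 1 ≤ i → i ≤ n → ¬ Matched n D i →
      ∀ h : i - 1 < n, g i = w' ⟨i - 1, h⟩)

/-- A walk in the glued multigraph `D̄C` from `a` to `b`: a list of edges, each tagged
by `true` (an edge of `C`) or `false` (an edge of `D`), consecutively incident. -/
def IsGluedWalk (n : ℕ) (C D : CrossinglessMatching n) : ℕ → ℕ → List (Bool × ℕ × ℕ) → Prop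
  | a, b, [] => a = b
  | a, b, e :: es =>
      (if e.1 = true then (e.2.1, e.2.2) ∈ C.cups else (e.2.1, e.2.2) ∈ D.cups) ∧
      ((a = e.2.1 ∧ IsGluedWalk n C D e.2.2 b es) ∨ (a = e.2.2 ∧ IsGluedWalk n C D e.2.1 b es))

/-- The standard flag of `ℂ^n`. -/
noncomputable def stdFlag (n k : ℕ) : Fin (n + 1) → Submodule ℂ (Fin n → ℂ) :=
  fun i => spanPQ n k (min i.val (n - k)) (i.val - (n - k))

/-!
A torus-fixed `N`-stable flag is the flag `Φ(w)` of a weight sequence `w`: the pieces `F i ⊓ P`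
and `F i ⊓ Q` are `N`-stable, hence killed by `N ^ dim`, hence initial segments
`span (p 1, …, p t)` and `span (q 1, …, q b)`.

For `Φ(w)` the cup condition at a cup says that `w` is balanced on it; as the inside of a cup is
tiled by smaller cups, this amounts to opposite labels at the two endpoints of every cup. Then
the `∨`s of `w` up to a ray `m` are one per cup to the left of `m` plus the rays labelled `∨`, while
the ray condition at `m` (computed through the orientation `tabWeight S` of `m(S)`) asks for one
per cup: so it says that the rays carry `∧`. Hence `w ↦ Φ(w)` maps the orientations of `m(S)`
bijectively onto the torus-fixed points of `Y_S`, and an orientation amounts to choosing, for each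
of the `k` cups, the endpoint labelled `∨`.
-/

open Finset

section Counting

variable {n : ℕ}

lemma card_filter_fin_val (P : ℕ → Prop) [DecidablePred P] :
    #{j : Fin n | P j} = #{j ∈ range n | P j} := by
  simp only [← card_map Fin.valEmbedding, Fin.map_valEmbedding_univ, map_filter']
  congr 1
  ext j
  simp only [mem_filter, mem_range, mem_Iio, Fin.valEmbedding_apply]
  exact ⟨fun ⟨h, a, ha, e⟩ => ⟨h, e ▸ ha⟩, fun ⟨h, hp⟩ => ⟨h, ⟨j, h⟩, hp, rfl⟩⟩

-- Positions are 1-based: `j : Fin n` is the position `j + 1`.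
def countLabel (w : Fin n → Bool) (v : Bool) (a b : ℕ) : ℕ :=
  #{j : Fin n | a ≤ j.val + 1 ∧ j.val + 1 ≤ b ∧ w j = v}

variable (w : Fin n → Bool)

lemma countLabel_split (v : Bool) {a c b : ℕ} (hac : a ≤ c + 1) (hcb : c ≤ b) :
    countLabel w v a b = countLabel w v a c + countLabel w v (c + 1) b := by
  rw [countLabel, countLabel, countLabel, ← card_union_of_disjoint]
  · congr 1
    ext j
    by_cases hv : w j = v <;> simp [hv]; omega
  · rw [disjoint_filter]
    intro j _ h1 h2
    omega

lemma countLabel_of_lt (v : Bool) {a b : ℕ} (hab : b < a) : countLabel w v a b = 0 := by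
  rw [countLabel, card_eq_zero, filter_eq_empty_iff]
  omega

lemma countLabel_self (v : Bool) {m : ℕ} (hm₁ : 1 ≤ m) (hm : m - 1 < n) :
    countLabel w v m m = if w ⟨m - 1, hm⟩ = v then 1 else 0 := by
  have : ({i | m ≤ i.val + 1 ∧ i.val + 1 ≤ m ∧ w i = v} : Finset (Fin n)) =
      ({⟨m - 1, hm⟩} : Finset (Fin n)).filter (fun i => w i = v) := by
    ext i
    simp only [mem_filter, mem_univ, true_and, mem_singleton, Fin.ext_iff]
    constructor
    · rintro ⟨h₁, h₂, h₃⟩; exact ⟨by omega, h₃⟩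
    · rintro ⟨h, h₃⟩; exact ⟨by omega, by omega, h₃⟩
  rw [countLabel, this, filter_singleton]
  split_ifs <;> rfl

lemma countLabel_true_add_false {a b : ℕ} (ha : 1 ≤ a) (hb : b ≤ n) :
    countLabel w true a b + countLabel w false a b = b + 1 - a := by
  rw [countLabel, countLabel, ← card_union_of_disjoint]
  · have : #{j : Fin n | a ≤ j.val + 1 ∧ j.val + 1 ≤ b} = b + 1 - a := by
      rw [card_filter_fin_val (fun j => a ≤ j + 1 ∧ j + 1 ≤ b),
        show {j ∈ range n | a ≤ j + 1 ∧ j + 1 ≤ b} = Ico (a - 1) b by ext; simp; omega,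
        Nat.card_Ico]
      omega
    rw [← this]
    congr 1
    ext j
    cases h : w j <;> simp [h]
  · rw [disjoint_filter]
    intro j _ h1 h2
    simp_all

lemma bcount_eq_countLabel (m : ℕ) : bcount n w m = countLabel w true 1 m := by
  simp only [bcount, countLabel]
  congr 1
  ext j
  by_cases hv : w j = true <;> simp [hv]

lemma tcount_eq_countLabel (m : ℕ) : tcount n w m = countLabel w false 1 m := by
  simp only [tcount, countLabel]
  congr 1
  ext j
  by_cases hv : w j = false <;> simp [hv]

lemma tcount_add_bcount (m : ℕ) : tcount n w m + bcount n w m = min m n := by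
  rw [tcount, bcount, ← card_union_of_disjoint, min_comm, ← Fin.card_filter_val_lt]
  · congr 1
    ext j
    cases h : w j <;> simp [h]
  · rw [disjoint_filter]
    intro j _ h1 h2
    simp_all

lemma bcount_eq_add_countLabel {a b : ℕ} (ha : 1 ≤ a) (hab : a ≤ b + 1) :
    bcount n w b = bcount n w (a - 1) + countLabel w true a b := by
  rw [bcount_eq_countLabel, bcount_eq_countLabel, countLabel_split w true (c := a - 1) (by omega)
    (by omega), Nat.sub_add_cancel ha]

lemma tcount_eq_add_countLabel {a b : ℕ} (ha : 1 ≤ a) (hab : a ≤ b + 1) :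
    tcount n w b = tcount n w (a - 1) + countLabel w false a b := by
  rw [tcount_eq_countLabel, tcount_eq_countLabel, countLabel_split w false (c := a - 1) (by omega)
    (by omega), Nat.sub_add_cancel ha]

lemma bcount_succ (j : Fin n) :
    bcount n w (j.val + 1) = bcount n w j.val + if w j = true then 1 else 0 := by
  rw [bcount_eq_countLabel, bcount_eq_countLabel, countLabel_split w true (c := j.val) (by omega)
    (by omega), countLabel_self w true (by omega) (by omega)]
  rfl

lemma bcount_mono {a b : ℕ} (h : a ≤ b) : bcount n w a ≤ bcount n w b :=
  card_le_card (monotone_filter_right _ fun _ _ hj => ⟨hj.1.trans_le h, hj.2⟩)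

lemma tcount_mono {a b : ℕ} (h : a ≤ b) : tcount n w a ≤ tcount n w b :=
  card_le_card (monotone_filter_right _ fun _ _ hj => ⟨hj.1.trans_le h, hj.2⟩)

end Counting

section WeightSequences

variable {n k : ℕ} {w : Fin n → Bool}

lemma bcount_zero (w : Fin n → Bool) : bcount n w 0 = 0 := by
  simp [bcount]

lemma isWeightSeq_iff : IsWeightSeq n k w ↔ bcount n w n = k := by
  simp [IsWeightSeq, bcount]

lemma IsWeightSeq.bcount_le (hw : IsWeightSeq n k w) (m : ℕ) : bcount n w m ≤ k :=
  isWeightSeq_iff.1 hw ▸ card_le_card (monotone_filter_right _ fun j _ hj => ⟨j.isLt, hj.2⟩)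

lemma IsWeightSeq.tcount_le (hw : IsWeightSeq n k w) (m : ℕ) : tcount n w m ≤ n - k := by
  have h := tcount_add_bcount w n
  have hmono : tcount n w m ≤ tcount n w n :=
    card_le_card (monotone_filter_right _ fun j _ hj => ⟨j.isLt, hj.2⟩)
  rw [isWeightSeq_iff.1 hw, min_self] at h
  omega

lemma eq_of_bcount_eq {w w' : Fin n → Bool} (h : ∀ i ≤ n, bcount n w i = bcount n w' i) :
    w = w' := by
  funext j
  have h₁ := bcount_succ w j
  have h₂ := bcount_succ w' j
  rw [h j j.isLt.le, h (j + 1) j.isLt] at h₁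
  cases hw : w j <;> cases hw' : w' j <;> simp_all

lemma exists_bcount_eq (b : Fin (n + 1) → ℕ) (h0 : b 0 = 0)
    (hstep : ∀ j : Fin n, b j.succ = b j.castSucc ∨ b j.succ = b j.castSucc + 1) :
    ∃ w : Fin n → Bool, ∀ i : Fin (n + 1), bcount n w i = b i := by
  refine ⟨fun j => decide (b j.succ = b j.castSucc + 1), fun i => ?_⟩
  induction i using Fin.induction with
  | zero => rw [Fin.val_zero, bcount_zero, h0]
  | succ j ih =>
    rw [Fin.val_succ, bcount_succ, ← Fin.val_castSucc, ih]
    rcases hstep j with h | h <;> simp [h]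

end WeightSequences

section Spans

variable {n k : ℕ}

/-- `Pi.single j 1` is `p (j + 1)` for `j < n - k` and `q (j + 1 - (n - k))` otherwise. -/
def PQIndex (n k t b j : ℕ) : Prop := (j < t ∧ j < n - k) ∨ (n - k ≤ j ∧ j < n - k + b)

instance (n k t b : ℕ) : DecidablePred (PQIndex n k t b) := fun _ => by
  unfold PQIndex; infer_instance

lemma spanPQ_eq_span_image (t b : ℕ) :
    spanPQ n k t b = Submodule.span ℂ (Pi.basisFun ℂ (Fin n) '' {j | PQIndex n k t b j}) := by
  rw [spanPQ]
  congr 1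
  ext x
  simp [PQIndex, eq_comm]

lemma mem_spanPQ {t b : ℕ} {x : Fin n → ℂ} :
    x ∈ spanPQ n k t b ↔ ∀ j : Fin n, ¬ PQIndex n k t b j → x j = 0 := by
  rw [spanPQ_eq_span_image, Basis.mem_span_image]
  simp [Set.subset_def, not_imp_comm]

lemma single_mem_spanPQ_iff {t b : ℕ} (j : Fin n) :
    (Pi.single j 1 : Fin n → ℂ) ∈ spanPQ n k t b ↔ PQIndex n k t b j := by
  rw [spanPQ_eq_span_image, ← Pi.basisFun_apply, Basis.self_mem_span_image]
  rfl

lemma spanPQ_le_spanPQ_iff {t b t' b' : ℕ} :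
    spanPQ n k t b ≤ spanPQ n k t' b' ↔ ∀ j : Fin n, PQIndex n k t b j → PQIndex n k t' b' j := by
  rw [spanPQ_eq_span_image t b, Submodule.span_le]
  simp [Set.subset_def, single_mem_spanPQ_iff]

lemma spanPQ_mono {t b t' b' : ℕ} (ht : t ≤ t') (hb : b ≤ b') :
    spanPQ n k t b ≤ spanPQ n k t' b' :=
  spanPQ_le_spanPQ_iff.2 fun _ => by unfold PQIndex; omega

lemma spanPQ_eq_spanPQ_iff {t b t' b' : ℕ} (hk : k ≤ n) (ht : t ≤ n - k) (hb : b ≤ k)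
    (ht' : t' ≤ n - k) (hb' : b' ≤ k) :
    spanPQ n k t b = spanPQ n k t' b' ↔ t = t' ∧ b = b' := by
  refine ⟨fun h => ?_, fun ⟨rfl, rfl⟩ => rfl⟩
  have h₁ := spanPQ_le_spanPQ_iff.1 h.le
  have h₂ := spanPQ_le_spanPQ_iff.1 h.ge
  unfold PQIndex at h₁ h₂
  by_contra hne
  rcases Nat.lt_trichotomy t t' with htt | rfl | htt
  · have := h₂ ⟨t, by omega⟩; dsimp only at this; omega
  · rcases Nat.lt_or_gt_of_ne (fun h => hne ⟨rfl, h⟩) with hbb | hbb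
    · have := h₂ ⟨n - k + b, by omega⟩; dsimp only at this; omega
    · have := h₁ ⟨n - k + b', by omega⟩; dsimp only at this; omega
  · have := h₁ ⟨t', by omega⟩; dsimp only at this; omega

lemma finrank_spanPQ {t b : ℕ} (hk : k ≤ n) (ht : t ≤ n - k) (hb : b ≤ k) :
    finrank ℂ (spanPQ n k t b) = t + b := by
  rw [spanPQ_eq_span_image, Set.image_eq_range]
  refine (finrank_span_eq_card
    ((Pi.basisFun ℂ (Fin n)).linearIndependent.comp _ Subtype.val_injective)).trans ?_
  simp only [Fintype.card_subtype, Set.mem_ofPred_eq]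
  rw [card_filter_fin_val (PQIndex n k t b),
    show {j ∈ range n | PQIndex n k t b j} = range t ∪ Ico (n - k) (n - k + b) by
      ext; simp [PQIndex]; omega,
    card_union_of_disjoint (disjoint_left.2 fun j h₁ h₂ => by simp at h₁ h₂; omega),
    card_range, Nat.card_Ico]
  omega

lemma spanPQ_inf_spanPQ_of_iff {t b t' b' t'' b'' : ℕ}
    (h : ∀ j : Fin n, PQIndex n k t b j ∧ PQIndex n k t' b' j ↔ PQIndex n k t'' b'' j) :
    spanPQ n k t b ⊓ spanPQ n k t' b' = spanPQ n k t'' b'' := by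
  ext x
  simp only [Submodule.mem_inf, mem_spanPQ, ← h]
  constructor
  · rintro ⟨h₁, h₂⟩ j hj
    by_cases hj' : PQIndex n k t b j
    · exact h₂ j fun h' => hj ⟨hj', h'⟩
    · exact h₁ j hj'
  · exact fun hx => ⟨fun j hj => hx j fun h => hj h.1, fun j hj => hx j fun h => hj h.2⟩

lemma spanPQ_inf_Pmod (t b : ℕ) : spanPQ n k t b ⊓ Pmod n k = spanPQ n k t 0 :=
  spanPQ_inf_spanPQ_of_iff fun _ => by unfold PQIndex; omega

lemma spanPQ_inf_Qmod (t b : ℕ) : spanPQ n k t b ⊓ Qmod n k = spanPQ n k 0 b :=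
  spanPQ_inf_spanPQ_of_iff fun j => by have := j.isLt; unfold PQIndex; omega

lemma spanPQ_sup_spanPQ (t b : ℕ) : spanPQ n k t 0 ⊔ spanPQ n k 0 b = spanPQ n k t b := by
  rw [spanPQ_eq_span_image, spanPQ_eq_span_image, spanPQ_eq_span_image, ← Submodule.span_union,
    ← Set.image_union]
  congr 2
  ext j
  simp only [Set.mem_union, Set.mem_ofPred_eq, PQIndex]
  omega

lemma spanPQ_zero_zero : spanPQ n k 0 0 = ⊥ := by
  rw [eq_bot_iff]
  intro x hx
  rw [mem_spanPQ] at hx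
  exact (Submodule.mem_bot ℂ).2 (funext fun j => hx j (by unfold PQIndex; omega))

lemma spanPQ_top (hk : k ≤ n) : spanPQ n k (n - k) k = ⊤ := by
  rw [eq_top_iff]
  intro x _
  rw [mem_spanPQ]
  intro j hj
  exact absurd (by unfold PQIndex; omega) hj

end Spans

section NilpotentShift

variable {n k : ℕ}

lemma Nmap_pow_apply (d : ℕ) (x : Fin n → ℂ) (j : Fin n) :
    (Nmap n k ^ d) x j =
      if h : j.val + d < n - k ∨ (n - k ≤ j.val ∧ j.val + d < n) then
        x ⟨j.val + d, by omega⟩ else 0 := by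
  induction d generalizing x with
  | zero => simp
  | succ d ih =>
    rw [pow_succ, Module.End.mul_apply, ih]
    by_cases hc : j.val + d < n - k ∨ (n - k ≤ j.val ∧ j.val + d < n)
    · by_cases hc' : j.val + d + 1 < n ∧ j.val + d + 1 ≠ n - k
      · rw [dif_pos hc, Nmap, LinearMap.coe_mk, AddHom.coe_mk, dif_pos hc', dif_pos (by omega)]
        rfl
      · rw [dif_pos hc, Nmap, LinearMap.coe_mk, AddHom.coe_mk, dif_neg hc', dif_neg (by omega)]
    · rw [dif_neg hc, dif_neg (by omega)]

lemma isNilpotent_Nmap : IsNilpotent (Nmap n k) :=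
  ⟨n, LinearMap.ext fun x => funext fun j => by
    rw [Nmap_pow_apply, dif_neg (by omega)]; rfl⟩

lemma Nmap_pow_single (d : ℕ) (j : Fin n) :
    (Nmap n k ^ d) (Pi.single j 1) =
      if h : d ≤ j.val ∧ (j.val < n - k ∨ n - k ≤ j.val - d) then
        Pi.single (⟨j.val - d, by omega⟩ : Fin n) 1 else 0 := by
  funext l
  rw [Nmap_pow_apply]
  by_cases hh : d ≤ j.val ∧ (j.val < n - k ∨ n - k ≤ j.val - d)
  · rw [dif_pos hh]
    by_cases he : l.val + d = j.val
    · rw [dif_pos (by omega), show (⟨l.val + d, _⟩ : Fin n) = j from Fin.ext he,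
        show l = ⟨j.val - d, by omega⟩ from Fin.ext (by dsimp only; omega)]
      simp
    · rw [Pi.single_apply, if_neg (fun e => he (by rw [e]; dsimp only; omega))]
      split_ifs
      · exact Pi.single_eq_of_ne (fun e => he (congrArg Fin.val e)) 1
      · rfl
  · rw [dif_neg hh]
    split_ifs with hc
    · exact Pi.single_eq_of_ne (fun e => hh (by rw [← e]; dsimp only; omega)) 1
    · rfl

lemma map_Nmap_pow_spanPQ (hk : k ≤ n) (d : ℕ) {t b : ℕ} (ht : t ≤ n - k) (hb : b ≤ k) :
    (spanPQ n k t b).map (Nmap n k ^ d) = spanPQ n k (t - d) (b - d) := by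
  rw [spanPQ_eq_span_image, Submodule.map_span, Set.image_image]
  apply le_antisymm
  · rw [Submodule.span_le]
    rintro _ ⟨j, hj, rfl⟩
    have hj : PQIndex n k t b j := hj
    rw [SetLike.mem_coe]
    dsimp only
    rw [Pi.basisFun_apply, Nmap_pow_single]
    split_ifs with hh
    · exact (single_mem_spanPQ_iff _).2 (by unfold PQIndex at hj ⊢; dsimp only; omega)
    · exact zero_mem _
  · rw [spanPQ_eq_span_image, Submodule.span_le]
    rintro _ ⟨l, hl, rfl⟩
    have hl : PQIndex n k (t - d) (b - d) l := hl
    unfold PQIndex at hl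
    refine Submodule.subset_span ⟨⟨l.val + d, by omega⟩,
      show PQIndex n k t b (l.val + d) by unfold PQIndex; omega, ?_⟩
    dsimp only
    rw [Pi.basisFun_apply, Pi.basisFun_apply, Nmap_pow_single, dif_pos (by dsimp only; omega)]
    congr
    exact Nat.add_sub_cancel _ _

lemma comap_Nmap_pow_spanPQ (d : ℕ) {t b : ℕ} (ht : t ≤ n - k) :
    (spanPQ n k t b).comap (Nmap n k ^ d) = spanPQ n k (min (n - k) (t + d)) (min k (b + d)) := by
  ext x
  rw [Submodule.mem_comap, mem_spanPQ, mem_spanPQ]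
  constructor
  · intro h l hl
    unfold PQIndex at hl
    have := h ⟨l.val - d, by omega⟩ (by unfold PQIndex; dsimp only; omega)
    rwa [Nmap_pow_apply, dif_pos (by dsimp only; omega),
      show (⟨l.val - d + d, _⟩ : Fin n) = l from Fin.ext (by dsimp only; omega)] at this
  · intro h j hj
    rw [Nmap_pow_apply]
    split_ifs with hc
    · exact h _ (by unfold PQIndex at hj ⊢; dsimp only; omega)
    · rfl

lemma ker_Nmap_pow (d : ℕ) :
    LinearMap.ker (Nmap n k ^ d) = spanPQ n k (min (n - k) d) (min k d) := by
  rw [← Submodule.comap_bot, ← spanPQ_zero_zero, comap_Nmap_pow_spanPQ d (Nat.zero_le _),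
    zero_add]

lemma range_Nmap_pow (hk : k ≤ n) (d : ℕ) :
    LinearMap.range (Nmap n k ^ d) = spanPQ n k (n - k - d) (k - d) := by
  rw [LinearMap.range_eq_map, ← spanPQ_top hk, map_Nmap_pow_spanPQ hk d le_rfl le_rfl]

-- `htk` makes the exponent `n - k - t + b` at least `k`, so that the range lies in `P`.
lemma comap_Nmap_pow_range_Nmap_pow {t b : ℕ} (hbt : b ≤ t) (hbk : b ≤ k)
    (htk : t + 2 * k ≤ n + b) :
    (LinearMap.range (Nmap n k ^ (n - k - t + b))).comap (Nmap n k ^ b) = spanPQ n k t b := by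
  rw [range_Nmap_pow (by omega), comap_Nmap_pow_spanPQ b (by omega)]
  congr 1 <;> omega

lemma Nmap_mem_spanPQ (hk : k ≤ n) {t b : ℕ} (ht : t ≤ n - k) (hb : b ≤ k) {x : Fin n → ℂ}
    (hx : x ∈ spanPQ n k t b) : Nmap n k x ∈ spanPQ n k t b := by
  have h := Submodule.mem_map_of_mem (f := Nmap n k ^ 1) hx
  rw [map_Nmap_pow_spanPQ hk 1 ht hb, pow_one] at h
  exact spanPQ_mono (Nat.sub_le _ _) (Nat.sub_le _ _) h

end NilpotentShift

lemma le_ker_pow_finrank_of_isNilpotent {K V : Type*} [Field K] [AddCommGroup V] [Module K V]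
    [FiniteDimensional K V] {f : Module.End K V} (hf : IsNilpotent f) {W : Submodule K V}
    (hW : ∀ x ∈ W, f x ∈ W) : W ≤ LinearMap.ker (f ^ finrank K W) := by
  set g := f.restrict hW
  have hg : g ^ finrank K W = 0 := by
    have h := LinearMap.aeval_self_charpoly g
    rwa [(Module.End.isNilpotent.restrict hW hf).charpoly_eq_X_pow_finrank, map_pow,
      Polynomial.aeval_X] at h
  intro x hx
  have := congrArg Subtype.val (LinearMap.congr_fun hg ⟨x, hx⟩)
  rwa [Module.End.pow_restrict, LinearMap.restrict_apply] at this

section InvariantSubspaces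

variable {n k : ℕ}

lemma finrank_Pmod (hk : k ≤ n) : finrank ℂ (Pmod n k) = n - k :=
  finrank_spanPQ hk le_rfl (Nat.zero_le k)

lemma finrank_Qmod (hk : k ≤ n) : finrank ℂ (Qmod n k) = k :=
  (finrank_spanPQ hk (Nat.zero_le _) le_rfl).trans (zero_add k)

lemma eq_spanPQ_of_le_Pmod (hk : k ≤ n) {W : Submodule ℂ (Fin n → ℂ)} (hWP : W ≤ Pmod n k)
    (hW : ∀ x ∈ W, Nmap n k x ∈ W) : W = spanPQ n k (finrank ℂ W) 0 := by
  have hdim : finrank ℂ W ≤ n - k :=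
    finrank_Pmod hk ▸ Submodule.finrank_mono hWP
  refine Submodule.eq_of_le_of_finrank_eq ?_ ?_
  · have h := le_inf (le_ker_pow_finrank_of_isNilpotent isNilpotent_Nmap hW) hWP
    rwa [ker_Nmap_pow, spanPQ_inf_Pmod, min_eq_right hdim] at h
  · rw [finrank_spanPQ hk hdim (Nat.zero_le k), add_zero]

lemma eq_spanPQ_of_le_Qmod (hk : k ≤ n) {W : Submodule ℂ (Fin n → ℂ)} (hWQ : W ≤ Qmod n k)
    (hW : ∀ x ∈ W, Nmap n k x ∈ W) : W = spanPQ n k 0 (finrank ℂ W) := by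
  have hdim : finrank ℂ W ≤ k :=
    finrank_Qmod hk ▸ Submodule.finrank_mono hWQ
  refine Submodule.eq_of_le_of_finrank_eq ?_ ?_
  · have h := le_inf (le_ker_pow_finrank_of_isNilpotent isNilpotent_Nmap hW) hWQ
    rwa [ker_Nmap_pow, spanPQ_inf_Qmod, min_eq_right hdim] at h
  · rw [finrank_spanPQ hk (Nat.zero_le _) hdim, zero_add]

end InvariantSubspaces

section TorusFixedFlags

variable {n k : ℕ} {F : Fin (n + 1) → Submodule ℂ (Fin n → ℂ)}

lemma IsNFlag.mapsTo (hF : IsNFlag n k F) (i : Fin (n + 1)) : ∀ x ∈ F i, Nmap n k x ∈ F i := by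
  induction i using Fin.cases with
  | zero =>
    have h0 : F 0 = ⊥ := Submodule.finrank_eq_zero.1 (hF.2.1 0)
    simp [h0]
  | succ j =>
    exact fun x hx => hF.1 (Fin.castSucc_le_succ j) (hF.2.2 j ⟨x, hx, rfl⟩)

lemma IsNFlag.eq_spanPQ (hk : k ≤ n) (hF : IsNFlag n k F) (hT : TorusFixed n k F)
    (i : Fin (n + 1)) :
    F i = spanPQ n k (finrank ℂ ↥(F i ⊓ Pmod n k)) (finrank ℂ ↥(F i ⊓ Qmod n k)) := by
  have hP := eq_spanPQ_of_le_Pmod hk inf_le_right fun x hx =>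
    ⟨hF.mapsTo i x hx.1, Nmap_mem_spanPQ hk le_rfl (Nat.zero_le k) hx.2⟩
  have hQ := eq_spanPQ_of_le_Qmod hk inf_le_right fun x hx =>
    ⟨hF.mapsTo i x hx.1, Nmap_mem_spanPQ hk (Nat.zero_le _) le_rfl hx.2⟩
  rw [← spanPQ_sup_spanPQ, ← hP, ← hQ]
  exact hT i

lemma IsNFlag.exists_eq_phiFlag (hk : k ≤ n) (hF : IsNFlag n k F) (hT : TorusFixed n k F) :
    ∃ w, IsWeightSeq n k w ∧ F = PhiFlag n k w := by
  set a := fun i => finrank ℂ ↥(F i ⊓ Pmod n k)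
  set b := fun i => finrank ℂ ↥(F i ⊓ Qmod n k)
  have ha (i) : a i ≤ n - k := finrank_Pmod hk ▸ Submodule.finrank_mono inf_le_right
  have hb (i) : b i ≤ k := finrank_Qmod hk ▸ Submodule.finrank_mono inf_le_right
  have hab (i) : a i + b i = i := by
    rw [← finrank_spanPQ hk (ha i) (hb i), ← hF.eq_spanPQ hk hT i, hF.2.1 i]
  have hmono_a : Monotone a := fun _ _ h => Submodule.finrank_mono (inf_le_inf_right _ (hF.1 h))
  have hmono_b : Monotone b := fun _ _ h => Submodule.finrank_mono (inf_le_inf_right _ (hF.1 h))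
  obtain ⟨w, hw⟩ := exists_bcount_eq b (by have := hab 0; simp only [Fin.val_zero] at this; omega)
    fun j => by
      have h₁ := hab j.succ
      have h₂ := hab j.castSucc
      have h₃ := hmono_a (Fin.castSucc_le_succ j)
      have h₄ := hmono_b (Fin.castSucc_le_succ j)
      simp only [Fin.val_succ, Fin.val_castSucc] at h₁ h₂
      omega
  refine ⟨w, isWeightSeq_iff.2 ?_, funext fun i => ?_⟩
  · have h₁ := hw (Fin.last n)
    have h₂ := hab (Fin.last n)
    have h₃ := ha (Fin.last n)
    have h₄ := hb (Fin.last n)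
    simp only [Fin.val_last] at h₁ h₂
    omega
  · have h₁ := tcount_add_bcount w i
    have h₂ := hab i
    rw [hw i] at h₁
    rw [hF.eq_spanPQ hk hT i, PhiFlag, hw i, show tcount n w i = a i by omega]

lemma phiFlag_torusFixed (w : Fin n → Bool) : TorusFixed n k (PhiFlag n k w) := fun _ => by
  rw [PhiFlag, spanPQ_inf_Pmod, spanPQ_inf_Qmod, spanPQ_sup_spanPQ]

lemma phiFlag_isNFlag (hk : k ≤ n) {w : Fin n → Bool} (hw : IsWeightSeq n k w) :
    IsNFlag n k (PhiFlag n k w) := by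
  refine ⟨fun i j h => spanPQ_mono (tcount_mono w h) (bcount_mono w h), fun i => ?_, fun j => ?_⟩
  · rw [PhiFlag, finrank_spanPQ hk (hw.tcount_le _) (hw.bcount_le _), tcount_add_bcount]
    omega
  · rw [PhiFlag, PhiFlag, ← pow_one (Nmap n k),
      map_Nmap_pow_spanPQ hk 1 (hw.tcount_le _) (hw.bcount_le _)]
    have h₁ := tcount_add_bcount w (j + 1)
    have h₂ := tcount_add_bcount w j
    have h₃ := bcount_succ w j
    apply spanPQ_mono <;> split_ifs at h₃ <;> simp only [Fin.val_succ, Fin.val_castSucc] <;> omega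

lemma eq_of_phiFlag_eq {w w' : Fin n → Bool} (hk : k ≤ n) (hw : IsWeightSeq n k w)
    (hw' : IsWeightSeq n k w') (h : PhiFlag n k w = PhiFlag n k w') : w = w' :=
  eq_of_bcount_eq fun i hi => ((spanPQ_eq_spanPQ_iff hk (hw.tcount_le i) (hw.bcount_le i)
    (hw'.tcount_le i) (hw'.bcount_le i)).1 (congrFun h ⟨i, by omega⟩)).2

end TorusFixedFlags

namespace CrossinglessMatching

variable {n : ℕ} (C : CrossinglessMatching n)

lemma eq_of_common_endpoint {q q' : ℕ × ℕ} {m : ℕ} (hq : q ∈ C.cups) (hq' : q' ∈ C.cups)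
    (hm : m = q.1 ∨ m = q.2) (hm' : m = q'.1 ∨ m = q'.2) : q = q' := by
  by_contra hne
  have := C.disjoint' q hq q' hq' hne
  omega

lemma nested_of_endpoint_inside {p q : ℕ × ℕ} {m : ℕ} (hp : p ∈ C.cups) (hq : q ∈ C.cups)
    (hm : m = q.1 ∨ m = q.2) (h₁ : p.1 < m) (h₂ : m < p.2) : p.1 < q.1 ∧ q.2 < p.2 := by
  have hpq : p ≠ q := by rintro rfl; omega
  have := C.disjoint' p hp q hq hpq
  have := C.noncross p hp q hq
  have := C.noncross q hq p hp
  have := C.mem_range q hq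
  omega

lemma lt_of_not_matched {q : ℕ × ℕ} {m : ℕ} (hq : q ∈ C.cups) (hm : ¬ Matched n C m)
    (h : q.1 ≤ m) : q.2 < m := by
  by_contra hc
  have h₁ : q.1 ≠ m := fun h => hm ⟨q, hq, Or.inl h.symm⟩
  have h₂ : q.2 ≠ m := fun h => hm ⟨q, hq, Or.inr h.symm⟩
  exact hm (C.rays_outside q hq m (by omega) (by omega))

def IsTiled (a b : ℕ) : Prop :=
  ∀ m, a ≤ m → m ≤ b → ∃ q ∈ C.cups, (m = q.1 ∨ m = q.2) ∧ a ≤ q.1 ∧ q.2 ≤ b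

variable {C}

lemma isTiled_interior {p : ℕ × ℕ} (hp : p ∈ C.cups) : C.IsTiled (p.1 + 1) (p.2 - 1) := by
  intro m h₁ h₂
  obtain ⟨q, hq, hmq⟩ := C.rays_outside p hp m (by omega) (by omega)
  have := C.nested_of_endpoint_inside hp hq hmq (by omega) (by omega)
  exact ⟨q, hq, hmq, by omega, by omega⟩

lemma IsTiled.exists_first_cup {a b : ℕ} (hC : C.IsTiled a b) (hab : a ≤ b) :
    ∃ c, (a, c) ∈ C.cups ∧ c ≤ b ∧ C.IsTiled (c + 1) b := by
  obtain ⟨q, hq, hm, hq₁, hq₂⟩ := hC a le_rfl hab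
  have hqr := C.mem_range q hq
  obtain rfl : a = q.1 := by omega
  refine ⟨q.2, hq, hq₂, fun m hm₁ hm₂ => ?_⟩
  obtain ⟨r, hr, hmr, hr₁, hr₂⟩ := hC m (by omega) hm₂
  refine ⟨r, hr, hmr, ?_, hr₂⟩
  by_contra hc
  have hrq : r ≠ q := by rintro rfl; omega
  have := C.disjoint' r hr q hq hrq
  have := C.nested_of_endpoint_inside hq hr (Or.inl rfl) (by omega) (by omega)
  omega

lemma two_mul_card_cups_le (a b : ℕ) :
    2 * #{q ∈ C.cups | a ≤ q.1 ∧ q.2 ≤ b} ≤ b + 1 - a := by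
  set S := {q ∈ C.cups | a ≤ q.1 ∧ q.2 ≤ b}
  have hdisj : (S : Set (ℕ × ℕ)).PairwiseDisjoint fun q => ({q.1, q.2} : Finset ℕ) := by
    intro q hq q' hq' hne
    have := C.disjoint' q (mem_filter.1 hq).1 q' (mem_filter.1 hq').1 hne
    simp only [Function.onFun, disjoint_insert_left, disjoint_insert_right, disjoint_singleton,
      mem_insert, mem_singleton]
    omega
  have hcard : #(S.biUnion fun q => {q.1, q.2}) = 2 * #S := by
    rw [card_biUnion hdisj, sum_congr rfl fun q hq => card_pair
      (C.mem_range q (mem_filter.1 hq).1).2.1.ne, sum_const, smul_eq_mul, mul_comm]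
  have hsub : S.biUnion (fun q => {q.1, q.2}) ⊆ Icc a b := by
    intro x hx
    obtain ⟨q, hq, hxq⟩ := mem_biUnion.1 hx
    have := C.mem_range q (mem_filter.1 hq).1
    have := (mem_filter.1 hq).2
    simp only [mem_insert, mem_singleton] at hxq
    rw [mem_Icc]
    omega
  have := card_le_card hsub
  rw [hcard, Nat.card_Icc] at this
  omega

end CrossinglessMatching

section Balanced

variable {n : ℕ} {C : CrossinglessMatching n} {w : Fin n → Bool}

def Balanced (w : Fin n → Bool) (a b : ℕ) : Prop := countLabel w true a b = countLabel w false a b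

def OppositeOnCups (w : Fin n → Bool) (C : CrossinglessMatching n) : Prop :=
  ∀ p ∈ C.cups, ∀ (h₁ : p.1 - 1 < n) (h₂ : p.2 - 1 < n), w ⟨p.1 - 1, h₁⟩ ≠ w ⟨p.2 - 1, h₂⟩

lemma Balanced.append {a c b : ℕ} (hac : a ≤ c + 1) (hcb : c ≤ b) (h₁ : Balanced w a c)
    (h₂ : Balanced w (c + 1) b) : Balanced w a b := by
  unfold Balanced at *
  rw [countLabel_split w true hac hcb, countLabel_split w false hac hcb, h₁, h₂]

lemma balanced_of_isTiled {a b : ℕ} (hC : C.IsTiled a b)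
    (hcups : ∀ q ∈ C.cups, a ≤ q.1 → q.2 ≤ b → Balanced w q.1 q.2) : Balanced w a b := by
  induction hL : b + 1 - a using Nat.strong_induction_on generalizing a with
  | _ L ih =>
    rcases lt_or_ge b a with hba | hab
    · simp only [Balanced, countLabel_of_lt w _ hba]
    obtain ⟨c, hc, hcb, hC'⟩ := hC.exists_first_cup hab
    have := C.mem_range _ hc
    exact (hcups _ hc le_rfl hcb).append (by omega) hcb
      (ih _ (by omega) hC' (fun q hq h₁ h₂ => hcups q hq (by omega) h₂) rfl)

lemma balanced_cup_iff {p : ℕ × ℕ} (hp : p ∈ C.cups) (hint : Balanced w (p.1 + 1) (p.2 - 1))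
    (h₁ : p.1 - 1 < n) (h₂ : p.2 - 1 < n) :
    Balanced w p.1 p.2 ↔ w ⟨p.1 - 1, h₁⟩ ≠ w ⟨p.2 - 1, h₂⟩ := by
  have hpr := C.mem_range p hp
  have hsplit (v : Bool) : countLabel w v p.1 p.2 =
      countLabel w v p.1 p.1 + countLabel w v (p.1 + 1) (p.2 - 1) + countLabel w v p.2 p.2 := by
    rw [countLabel_split w v (c := p.1) (by omega) (by omega),
      countLabel_split w v (a := p.1 + 1) (c := p.2 - 1) (by omega) (by omega),
      Nat.sub_add_cancel (by omega), add_assoc]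
  unfold Balanced at *
  rw [hsplit, hsplit, hint, countLabel_self w _ (by omega) h₁, countLabel_self w _ (by omega) h₁,
    countLabel_self w _ (by omega) h₂, countLabel_self w _ (by omega) h₂]
  cases w ⟨p.1 - 1, h₁⟩ <;> cases w ⟨p.2 - 1, h₂⟩ <;> simp <;> omega

lemma balanced_iff_oppositeOnCups :
    (∀ p ∈ C.cups, Balanced w p.1 p.2) ↔ OppositeOnCups w C := by
  constructor
  · intro h p hp h₁ h₂
    exact (balanced_cup_iff hp (balanced_of_isTiled (CrossinglessMatching.isTiled_interior hp)
      fun q hq _ _ => h q hq) h₁ h₂).1 (h p hp)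
  · intro h p hp
    induction hL : p.2 - p.1 using Nat.strong_induction_on generalizing p with
    | _ L ih =>
      have hpr := C.mem_range p hp
      refine (balanced_cup_iff hp (balanced_of_isTiled (CrossinglessMatching.isTiled_interior hp)
        fun q hq hq₁ hq₂ => ih _ (by omega) q hq rfl) (by omega) (by omega)).2
        (h p hp (by omega) (by omega))

end Balanced

section Gaps

variable {n : ℕ} {C : CrossinglessMatching n} {w : Fin n → Bool}

instance (C : CrossinglessMatching n) : DecidablePred (Matched n C) := fun _ => by
  unfold Matched; infer_instance

lemma card_matched_true_eq_card_cups (hw : OppositeOnCups w C) {m : ℕ}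
    (hgap : ∀ q ∈ C.cups, q.1 ≤ m → q.2 ≤ m) :
    #{j : Fin n | (j.val < m ∧ w j = true) ∧ Matched n C (j.val + 1)} =
      #{q ∈ C.cups | q.2 ≤ m} := by
  -- each cup is sent to its endpoint labelled `∨`
  symm
  refine card_bij (fun q hq => ⟨(if w ⟨q.1 - 1, by have := C.mem_range q (mem_filter.1 hq).1; omega⟩
    then q.1 else q.2) - 1, by have := C.mem_range q (mem_filter.1 hq).1; split_ifs <;> omega⟩)
    ?_ ?_ ?_
  · intro q hq
    obtain ⟨hq, hqm⟩ := mem_filter.1 hq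
    have hqr := C.mem_range q hq
    have hop := hw q hq (by omega) (by omega)
    simp only [mem_filter, mem_univ, true_and]
    split_ifs with h
    · exact ⟨⟨by omega, h⟩, q, hq, Or.inl (by omega)⟩
    · exact ⟨⟨by omega, by simpa [h] using hop.symm⟩, q, hq, Or.inr (by omega)⟩
  · intro q hq q' hq' he
    have := C.mem_range q (mem_filter.1 hq).1
    have := C.mem_range q' (mem_filter.1 hq').1
    simp only [Fin.mk.injEq] at he
    exact C.eq_of_common_endpoint (mem_filter.1 hq).1 (mem_filter.1 hq').1
      (m := (if w ⟨q.1 - 1, by omega⟩ then q.1 else q.2)) (by split_ifs <;> simp)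
      (by split_ifs at he ⊢ <;> omega)
  · intro j hj
    obtain ⟨-, ⟨hjm, hwj⟩, q, hq, hjq⟩ := mem_filter.1 hj
    have hqr := C.mem_range q hq
    have hop := hw q hq (by omega) (by omega)
    refine ⟨q, mem_filter.2 ⟨hq, hgap q hq (by omega)⟩, Fin.ext ?_⟩
    rcases hjq with h | h
    · have e : (⟨q.1 - 1, by omega⟩ : Fin n) = j := Fin.ext (by dsimp only; omega)
      simp only [e, hwj, if_true]
      omega
    · have e : (⟨q.2 - 1, by omega⟩ : Fin n) = j := Fin.ext (by dsimp only; omega)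
      rw [e, hwj] at hop
      simp only [hop, Bool.false_eq_true, if_false, ← e]

lemma OppositeOnCups.bcount_eq (hw : OppositeOnCups w C) {m : ℕ}
    (hgap : ∀ q ∈ C.cups, q.1 ≤ m → q.2 ≤ m) :
    bcount n w m = #{q ∈ C.cups | q.2 ≤ m} +
      #{j : Fin n | (j.val < m ∧ w j = true) ∧ ¬ Matched n C (j.val + 1)} := by
  rw [bcount, ← card_filter_add_card_filter_not (fun j : Fin n => Matched n C (j.val + 1)),
    filter_filter, filter_filter, card_matched_true_eq_card_cups hw hgap]

lemma OrientsMatching.bcount_eq (hw : OrientsMatching n w C) {m : ℕ}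
    (hgap : ∀ q ∈ C.cups, q.1 ≤ m → q.2 ≤ m) : bcount n w m = #{q ∈ C.cups | q.2 ≤ m} := by
  rw [OppositeOnCups.bcount_eq hw.1 hgap, add_eq_left, card_eq_zero, filter_eq_empty_iff]
  rintro j - ⟨⟨-, hj⟩, hm⟩
  have := hw.2 (j.val + 1) (by omega) (by omega) hm (by omega)
  simp_all

lemma OrientsMatching.isWeightSeq {k : ℕ} (hw : OrientsMatching n w C) (hC : #C.cups = k) :
    IsWeightSeq n k w := by
  rw [isWeightSeq_iff, hw.bcount_eq fun q hq _ => (C.mem_range q hq).2.2, ← hC]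
  exact congrArg card (filter_true_of_mem fun q hq => (C.mem_range q hq).2.2)

lemma OppositeOnCups.eq_false_of_bcount_eq (hw : OppositeOnCups w C) {m : ℕ} (hm₁ : 1 ≤ m)
    (hm : m - 1 < n) (hray : ¬ Matched n C m) (hb : bcount n w m = #{q ∈ C.cups | q.2 ≤ m}) :
    w ⟨m - 1, hm⟩ = false := by
  rw [hw.bcount_eq fun q hq h => (C.lt_of_not_matched hq hray h).le, add_eq_left, card_eq_zero,
    filter_eq_empty_iff] at hb
  have := hb (mem_univ ⟨m - 1, hm⟩)
  simp only [Nat.sub_add_cancel hm₁] at this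
  simpa [hray, show m - 1 < m by omega] using this

end Gaps

section ComponentFixedPoints

variable {n k : ℕ} {C : CrossinglessMatching n} {w : Fin n → Bool}

lemma tabWeight_orientsMatching {S : StandardTableau n k} (hS : IsMatchOf n k S C) :
    OrientsMatching n (tabWeight n k S) C := by
  have hleft (m : ℕ) (hm : m - 1 < n) (hm₁ : 1 ≤ m) :
      tabWeight n k S ⟨m - 1, hm⟩ = decide (∃ q ∈ C.cups, q.1 = m) := by
    rw [tabWeight, Nat.sub_add_cancel hm₁]
    exact decide_eq_decide.2 (hS.2 m).symm
  refine ⟨fun p hp h₁ h₂ => ?_, fun m hm₁ _ hray hm => ?_⟩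
  · have hpr := C.mem_range p hp
    rw [hleft _ h₁ hpr.1, hleft _ h₂ (by omega), decide_eq_true ⟨p, hp, rfl⟩]
    refine fun h => ?_
    obtain ⟨q, hq, hq₁⟩ := of_decide_eq_true h.symm
    have := C.eq_of_common_endpoint hp hq (Or.inr rfl) (Or.inl hq₁.symm)
    subst this
    omega
  · rw [hleft _ hm hm₁, decide_eq_false_iff_not]
    exact fun ⟨q, hq, hq₁⟩ => hray ⟨q, hq, Or.inl hq₁.symm⟩

lemma cupCond_phiFlag_iff (hk : k ≤ n) (hw : IsWeightSeq n k w) :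
    CupCond n k C (PhiFlag n k w) ↔ ∀ p ∈ C.cups, Balanced w p.1 p.2 := by
  refine forall₂_congr fun p hp => ?_
  have hpr := C.mem_range p hp
  have hb := bcount_eq_add_countLabel w hpr.1 (b := p.2) (by omega)
  have ht := tcount_eq_add_countLabel w hpr.1 (b := p.2) (by omega)
  have hL := countLabel_true_add_false w hpr.1 hpr.2.2
  simp only [PhiFlag]
  rw [map_Nmap_pow_spanPQ hk _ (hw.tcount_le _) (hw.bcount_le _), spanPQ_eq_spanPQ_iff hk
    ((Nat.sub_le _ _).trans (hw.tcount_le _)) ((Nat.sub_le _ _).trans (hw.bcount_le _))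
    (hw.tcount_le _) (hw.bcount_le _), Balanced]
  exact ⟨fun h => by have := h (by omega) (by omega); omega, fun h _ _ => by omega⟩

lemma card_cups_before_ray_bounds (hC : #C.cups = k) {m : ℕ} (hmn : m ≤ n)
    (hm : ¬ Matched n C m) :
    2 * #{q ∈ C.cups | q.2 ≤ m} ≤ m ∧ m + 2 * k ≤ n + 2 * #{q ∈ C.cups | q.2 ≤ m} := by
  have h₁ := C.two_mul_card_cups_le 1 m
  have h₂ := C.two_mul_card_cups_le (m + 1) n
  have e₁ : {q ∈ C.cups | 1 ≤ q.1 ∧ q.2 ≤ m} = {q ∈ C.cups | q.2 ≤ m} :=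
    filter_congr fun q hq => by have := C.mem_range q hq; omega
  have e₂ : {q ∈ C.cups | m + 1 ≤ q.1 ∧ q.2 ≤ n} = {q ∈ C.cups | ¬ q.2 ≤ m} :=
    filter_congr fun q hq => by
      have := C.mem_range q hq
      have := fun h => C.lt_of_not_matched hq hm h
      omega
  have := card_filter_add_card_filter_not (s := C.cups) (fun q => q.2 ≤ m)
  rw [e₁] at h₁
  rw [e₂] at h₂
  omega

lemma rayCond_phiFlag_iff (hkn : 2 * k ≤ n) {S : StandardTableau n k} (hS : IsMatchOf n k S C)
    (hw : IsWeightSeq n k w) :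
    RayCond n k (tabWeight n k S) C (PhiFlag n k w) ↔
      ∀ m, 1 ≤ m → m ≤ n → ¬ Matched n C m → bcount n w m = #{q ∈ C.cups | q.2 ≤ m} := by
  set u := tabWeight n k S
  have key (m : ℕ) (hm : m < n + 1) (hray : ¬ Matched n C m) :
      PhiFlag n k w ⟨m, hm⟩ = (LinearMap.range (Nmap n k ^ (n - k - tcount n u m +
          bcount n u m))).comap (Nmap n k ^ bcount n u m) ↔
        bcount n w m = #{q ∈ C.cups | q.2 ≤ m} := by
    set c := #{q ∈ C.cups | q.2 ≤ m}
    have hu : bcount n u m = c :=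
      (tabWeight_orientsMatching hS).bcount_eq fun q hq h => (C.lt_of_not_matched hq hray h).le
    have htu := tcount_add_bcount u m
    have htw := tcount_add_bcount w m
    have hck : c ≤ k := hS.1 ▸ card_filter_le _ _
    obtain ⟨h₁, h₂⟩ := card_cups_before_ray_bounds hS.1 (by omega) hray
    rw [hu, show tcount n u m = m - c by omega,
      comap_Nmap_pow_range_Nmap_pow (by omega) hck (by omega), PhiFlag, Fin.val_mk,
      spanPQ_eq_spanPQ_iff (by omega) (hw.tcount_le _) (hw.bcount_le _) (by omega) hck]
    constructor <;> intro h <;> omega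
  exact ⟨fun h m hm₁ hmn hray => (key m (by omega) hray).1 (h m hm₁ _ hray),
    fun h m hm₁ hm hray => (key m hm hray).2 (h m hm₁ (by omega) hray)⟩

lemma phiFlag_mem_YS_iff (hkn : 2 * k ≤ n) {S : StandardTableau n k} (hS : IsMatchOf n k S C)
    (hw : IsWeightSeq n k w) : InYS n k S C (PhiFlag n k w) ↔ OrientsMatching n w C := by
  rw [InYS, cupCond_phiFlag_iff (by omega) hw, rayCond_phiFlag_iff hkn hS hw,
    balanced_iff_oppositeOnCups, and_iff_right (phiFlag_isNFlag (by omega) hw)]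
  constructor
  · exact fun ⟨hop, hray⟩ => ⟨hop, fun m hm₁ hmn hm h =>
      hop.eq_false_of_bcount_eq hm₁ h hm (hray m hm₁ hmn hm)⟩
  · exact fun ho => ⟨ho.1, fun m _ _ hm => ho.bcount_eq fun q hq h =>
      (C.lt_of_not_matched hq hm h).le⟩

lemma card_fixedPoints_eq_card_orientations (hkn : 2 * k ≤ n) {S : StandardTableau n k}
    (hS : IsMatchOf n k S C) :
    Nat.card {F : Fin (n + 1) → Submodule ℂ (Fin n → ℂ) // InYS n k S C F ∧ TorusFixed n k F} =
      Nat.card {w : Fin n → Bool // IsWeightSeq n k w ∧ OrientsMatching n w C} := by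
  refine (Nat.card_congr (Equiv.ofBijective (fun w => ⟨PhiFlag n k w.1,
    (phiFlag_mem_YS_iff hkn hS w.2.1).2 w.2.2, phiFlag_torusFixed _⟩) ⟨?_, ?_⟩)).symm
  · exact fun w w' h =>
      Subtype.ext (eq_of_phiFlag_eq (by omega) w.2.1 w'.2.1 (congrArg Subtype.val h))
  · rintro ⟨F, hF, hT⟩
    obtain ⟨w, hw, rfl⟩ := hF.1.exists_eq_phiFlag (by omega) hT
    exact ⟨⟨w, hw, (phiFlag_mem_YS_iff hkn hS hw).1 hF⟩, rfl⟩

end ComponentFixedPoints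

section Orientations

variable {n : ℕ} (C : CrossinglessMatching n)

def orientationOf (g : C.cups → Bool) : Fin n → Bool := fun j =>
  decide (∃ q : C.cups, (q.1.1 = j.val + 1 ∧ g q = true) ∨ (q.1.2 = j.val + 1 ∧ g q = false))

variable {C}

lemma orientationOf_fst (g : C.cups → Bool) (q : C.cups) (h : q.1.1 - 1 < n) :
    orientationOf C g ⟨q.1.1 - 1, h⟩ = g q := by
  have hqr := C.mem_range q.1 q.2
  rw [orientationOf, Nat.sub_add_cancel hqr.1]
  cases hg : g q
  · refine decide_eq_false fun ⟨q', hq'⟩ => ?_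
    obtain rfl :=
      Subtype.ext (C.eq_of_common_endpoint q'.2 q.2 (m := q.1.1) (by omega) (Or.inl rfl))
    rcases hq' with h' | h' <;> simp_all
  · exact decide_eq_true ⟨q, Or.inl ⟨rfl, hg⟩⟩

lemma orientationOf_snd (g : C.cups → Bool) (q : C.cups) (h : q.1.2 - 1 < n) :
    orientationOf C g ⟨q.1.2 - 1, h⟩ = !g q := by
  have hqr := C.mem_range q.1 q.2
  rw [orientationOf, Nat.sub_add_cancel (by omega : 1 ≤ q.1.2)]
  cases hg : g q
  · exact decide_eq_true ⟨q, Or.inr ⟨rfl, hg⟩⟩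
  · refine decide_eq_false fun ⟨q', hq'⟩ => ?_
    obtain rfl :=
      Subtype.ext (C.eq_of_common_endpoint q'.2 q.2 (m := q.1.2) (by omega) (Or.inr rfl))
    rcases hq' with h' | h' <;> simp_all

lemma orientationOf_orientsMatching (g : C.cups → Bool) :
    OrientsMatching n (orientationOf C g) C := by
  refine ⟨fun p hp h₁ h₂ => ?_, fun m hm₁ _ hm h => ?_⟩
  · rw [orientationOf_fst g ⟨p, hp⟩, orientationOf_snd g ⟨p, hp⟩]
    cases g ⟨p, hp⟩ <;> simp
  · rw [orientationOf, Nat.sub_add_cancel hm₁]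
    exact decide_eq_false fun ⟨q, hq⟩ => hm ⟨q, q.2, by omega⟩

lemma OrientsMatching.eq_of_eq_on_fst {w w' : Fin n → Bool} (hw : OrientsMatching n w C)
    (hw' : OrientsMatching n w' C)
    (h : ∀ q ∈ C.cups, ∀ hq : q.1 - 1 < n, w ⟨q.1 - 1, hq⟩ = w' ⟨q.1 - 1, hq⟩) : w = w' := by
  funext j
  by_cases hj : Matched n C (j.val + 1)
  · obtain ⟨q, hq, hjq | hjq⟩ := hj
    · simpa [← hjq] using h q hq (by omega)
    · have e : (⟨q.2 - 1, by omega⟩ : Fin n) = j := Fin.ext (by dsimp only; omega)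
      have := C.mem_range q hq
      have h₁ := hw.1 q hq (by omega) (by omega)
      have h₂ := hw'.1 q hq (by omega) (by omega)
      rw [h q hq, e] at h₁
      rw [e] at h₂
      revert h₁ h₂
      cases w j <;> cases w' j <;> cases w' ⟨q.1 - 1, by omega⟩ <;> simp
  · have h₁ := hw.2 (j.val + 1) (by omega) (by omega) hj (by omega)
    have h₂ := hw'.2 (j.val + 1) (by omega) (by omega) hj (by omega)
    simp only [Nat.add_sub_cancel] at h₁ h₂
    rw [h₁, h₂]

lemma card_orientations {k : ℕ} (hC : #C.cups = k) :
    Nat.card {w : Fin n → Bool // IsWeightSeq n k w ∧ OrientsMatching n w C} = 2 ^ k := by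
  have e₁ := Equiv.subtypeEquivRight fun w : Fin n → Bool =>
    (⟨And.right, fun h => ⟨h.isWeightSeq hC, h⟩⟩ : IsWeightSeq n k w ∧ OrientsMatching n w C ↔ _)
  have e₂ : {w : Fin n → Bool // OrientsMatching n w C} ≃ (C.cups → Bool) :=
    Equiv.ofBijective (fun w q => w.1 ⟨q.1.1 - 1, by have := C.mem_range q.1 q.2; omega⟩)
      ⟨fun w w' h => Subtype.ext (w.2.eq_of_eq_on_fst w'.2 fun q hq _ => congrFun h ⟨q, hq⟩),
        fun g => ⟨⟨orientationOf C g, orientationOf_orientsMatching g⟩,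
          funext fun q => orientationOf_fst g q _⟩⟩
  rw [Nat.card_congr (e₁.trans e₂), Nat.card_eq_fintype_card, Fintype.card_fun, Fintype.card_coe,
    hC, Fintype.card_bool]

end Orientations

theorem card_orientations_and_fixed_points_general (n k : ℕ) (hkn : 2 * k ≤ n) :
    (∀ C : CrossinglessMatching n, C.cups.card = k →
      Nat.card {w : Fin n → Bool // IsWeightSeq n k w ∧ OrientsMatching n w C} = 2 ^ k) ∧
    (∀ (S : StandardTableau n k) (C : CrossinglessMatching n), IsMatchOf n k S C →
      Nat.card {F : Fin (n + 1) → Submodule ℂ (Fin n → ℂ) //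
          InYS n k S C F ∧ TorusFixed n k F} = 2 ^ k) :=
  ⟨fun _ hC => card_orientations hC, fun _ _ hS =>
    (card_fixedPoints_eq_card_orientations hkn hS).trans (card_orientations hS.1)⟩

/-- Every crossingless matching with exactly `k` cups is oriented by
exactly `2 ^ k` weight sequences; consequently every component `Y_S` contains exactly
`2 ^ k` torus-fixed flags. -/
theorem card_orientations_and_fixed_points (n k : ℕ) (hn : 1 ≤ n) (hkn : 2 * k ≤ n) :
    (∀ C : CrossinglessMatching n, C.cups.card = k →
      Nat.card {w : Fin n → Bool // IsWeightSeq n k w ∧ OrientsMatching n w C} = 2 ^ k) ∧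
    (∀ (S : StandardTableau n k) (C : CrossinglessMatching n), IsMatchOf n k S C →
      Nat.card {F : Fin (n + 1) → Submodule ℂ (Fin n → ℂ) //
          InYS n k S C F ∧ TorusFixed n k F} = 2 ^ k) :=
  card_orientations_and_fixed_points_general n k hkn

end Springer
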